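/- arXiv:0705.0412 — 2 statements merged into one kernel-verified Lean document; each statement's English description precedes it below -/
import Mathlib

section
/- For every nanoword w, the two quantities ⟨XYXYZZ, w⟩ − ⟨YXYZZX, w⟩ + ⟨XYZZXY, w⟩ − ⟨YZZXYX, w⟩ + ⟨ZZXYXY, w⟩ − ⟨ZXYXYZ, w⟩ and ⟨XXYYZZ, w⟩ − ⟨XYYZZX, w⟩ are each unchanged when w is replaced by its image under the base point move. (These are the word parts of the invariant CI₃ of plane closed curves.) -/
open Finset

/-- The canonical pattern of a word: each position is labelled by the index of the
first occurrence of its letter. Two words are isomorphic iff they have the same pattern. -/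
def patternOf {α : Type*} [DecidableEq α] (l : List α) : List ℕ :=
  l.map (fun a => l.idxOf a)

/-- The sub-word of `w` determined by a set `S` of letters: read, in order, exactly
those values of `w` lying in `S`. -/
def subword {α : Type*} [DecidableEq α] (w : List α) (S : Finset α) : List α :=
  w.filter (fun a => decide (a ∈ S))

/-- The pairing `⟨v, w⟩`: the sum, over all subsets `S` of the alphabet of `w` whose
induced sub-word is isomorphic to the pattern `v`, of `∏_{a ∈ S} sgn a`. -/
def pair {α : Type*} [DecidableEq α] (v : List ℕ) (w : List α) (sgn : α → ℤ) : ℤ :=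
  ∑ S ∈ w.toFinset.powerset,
    if patternOf (subword w S) = patternOf v then ∏ a ∈ S, sgn a else 0

/-!
Split every pairing according to whether the sub-word contains the base letter `a`. The base
point move leaves the sub-words avoiding `a`, and their signs, unchanged. A sub-word through `a`
is rotated one step (its initial `a` moves to the end) and its sign flips, so after the move it
is isomorphic to `v` exactly when before the move it was isomorphic to the pattern `u` whose
one-step rotation is `v`. In each word part of `CI₃` the patterns form a single cycle under this
rotation and their coefficients alternate along it, so the contributions through `a` cancel.
-/

namespace List

theorem mem_zip_iff_exists_getElem {α β : Type*} {l : List α} {m : List β}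
    (h : l.length = m.length) {p : α × β} :
    p ∈ l.zip m ↔ ∃ (i : ℕ) (hi : i < l.length), p = (l[i], m[i]) := by
  simp only [mem_iff_getElem, getElem_zip, length_zip, h, min_self]
  exact exists_congr fun i => exists_congr fun _ => eq_comm

theorem idxOf_le_of_getElem_eq {α : Type*} [DecidableEq α] {l : List α} {x : α} {k : ℕ}
    {hk : k < l.length} (h : l[k] = x) : l.idxOf x ≤ k := by
  by_contra! hlt
  simpa [h] using not_of_lt_findIdx hlt

theorem toFinset_append_singleton {α : Type*} [DecidableEq α] (a : α) (x : List α) :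
    (x ++ [a]).toFinset = (a :: x).toFinset :=
  toFinset_eq_of_perm _ _ (perm_append_singleton a x)

end List

section

variable {α β : Type*} [DecidableEq α] [DecidableEq β]

@[simp]
theorem length_patternOf (l : List α) : (patternOf l).length = l.length :=
  List.length_map _

theorem getElem_patternOf (l : List α) (i : ℕ) (hi : i < (patternOf l).length) :
    (patternOf l)[i] = l.idxOf (l[i]'(by simpa using hi)) :=
  List.getElem_map _

theorem patternOf_eq_iff {l : List α} {m : List β} :
    patternOf l = patternOf m ↔
      l.length = m.length ∧ ∀ p ∈ l.zip m, ∀ q ∈ l.zip m, (p.1 = q.1 ↔ p.2 = q.2) := by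
  constructor
  · intro h
    have hlen : l.length = m.length := by simpa using congrArg List.length h
    have hidx : ∀ k (hk : k < l.length), l.idxOf l[k] = m.idxOf m[k] := fun k hk => by
      simpa [patternOf] using List.getElem_of_eq h (by simpa using hk)
    refine ⟨hlen, ?_⟩
    simp only [List.mem_zip_iff_exists_getElem hlen]
    rintro _ ⟨i, hi, rfl⟩ _ ⟨j, hj, rfl⟩
    rw [← List.idxOf_inj (List.getElem_mem hi), ← List.idxOf_inj (List.getElem_mem (hlen ▸ hi)),
      hidx i hi, hidx j hj]
  · rintro ⟨hlen, hzip⟩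
    simp only [List.mem_zip_iff_exists_getElem hlen] at hzip
    have heq : ∀ i j (hi : i < l.length) (hj : j < l.length), l[i] = l[j] ↔ m[i] = m[j] :=
      fun i j hi hj => hzip _ ⟨i, hi, rfl⟩ _ ⟨j, hj, rfl⟩
    refine List.ext_getElem (by simp [hlen]) fun i hil him => ?_
    simp only [length_patternOf] at hil him
    simp only [getElem_patternOf]
    -- by `heq`, the least index carrying the letter at position `i` is the same in `l` and `m`
    have hl : l.idxOf l[i] < l.length := List.idxOf_lt_length_iff.mpr (List.getElem_mem _)
    have hm : m.idxOf m[i] < m.length := List.idxOf_lt_length_iff.mpr (List.getElem_mem _)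
    exact le_antisymm
      (List.idxOf_le_of_getElem_eq ((heq _ i (by omega) hil).mpr (List.getElem_idxOf hm)))
      (List.idxOf_le_of_getElem_eq ((heq _ i hl hil).mp (List.getElem_idxOf hl)))

theorem patternOf_rotate_eq_iff {l : List α} {m : List β} (n : ℕ) :
    patternOf (l.rotate n) = patternOf (m.rotate n) ↔ patternOf l = patternOf m := by
  simp only [patternOf_eq_iff, List.length_rotate]
  refine and_congr_right fun hlen => ?_
  simp only [List.zip, ← List.zipWith_rotate_distrib _ _ _ _ hlen, List.mem_rotate]

theorem patternOf_append_singleton_eq_iff (a : α) (t : List α) (u : List β) :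
    patternOf (t ++ [a]) = patternOf (u.rotate 1) ↔ patternOf (a :: t) = patternOf u := by
  rw [← patternOf_rotate_eq_iff (l := a :: t) (m := u) 1, List.rotate_cons_succ, List.rotate_zero]

theorem subword_cons (a : α) (x : List α) (S : Finset α) :
    subword (a :: x) S = if a ∈ S then a :: subword x S else subword x S := by
  by_cases h : a ∈ S <;> simp [subword, h]

theorem subword_append_singleton (a : α) (x : List α) (S : Finset α) :
    subword (x ++ [a]) S = if a ∈ S then subword x S ++ [a] else subword x S := by
  by_cases h : a ∈ S <;> simp [subword, List.filter_append, h]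

theorem Finset.prod_update_neg_of_mem {R : Type*} [CommRing R] {S : Finset α} {a : α}
    (h : a ∈ S) (f : α → R) :
    ∏ b ∈ S, Function.update f a (-f a) b = -∏ b ∈ S, f b := by
  rw [prod_update_of_mem h, sdiff_singleton_eq_erase, neg_mul, mul_prod_erase S f h]

def pairAvoiding (a : α) (v : List ℕ) (w : List α) (sgn : α → ℤ) : ℤ :=
  ∑ S ∈ w.toFinset.powerset with a ∉ S,
    if patternOf (subword w S) = patternOf v then ∏ b ∈ S, sgn b else 0

def pairThrough (a : α) (v : List ℕ) (w : List α) (sgn : α → ℤ) : ℤ :=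
  ∑ S ∈ w.toFinset.powerset with a ∈ S,
    if patternOf (subword w S) = patternOf v then ∏ b ∈ S, sgn b else 0

theorem pair_eq_pairAvoiding_add_pairThrough (a : α) (v : List ℕ) (w : List α)
    (sgn : α → ℤ) : pair v w sgn = pairAvoiding a v w sgn + pairThrough a v w sgn :=
  (sum_filter_not_add_sum_filter _ _ _).symm

variable (a : α) (x : List α) (sgn : α → ℤ)

theorem pairAvoiding_append_singleton (v : List ℕ) (e : ℤ) :
    pairAvoiding a v (x ++ [a]) (Function.update sgn a e) = pairAvoiding a v (a :: x) sgn := by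
  rw [pairAvoiding, pairAvoiding, List.toFinset_append_singleton]
  refine sum_congr rfl fun S hS => ?_
  have haS : a ∉ S := (mem_filter.mp hS).2
  have hprod : ∏ b ∈ S, Function.update sgn a e b = ∏ b ∈ S, sgn b :=
    prod_congr rfl fun b hb => Function.update_of_ne (ne_of_mem_of_not_mem hb haS) _ _
  simp only [subword_cons, subword_append_singleton, haS, if_false, hprod]

theorem pairThrough_append_singleton {v u : List ℕ} (h : patternOf (u.rotate 1) = patternOf v) :
    pairThrough a v (x ++ [a]) (Function.update sgn a (-sgn a)) =
      -pairThrough a u (a :: x) sgn := by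
  rw [pairThrough, pairThrough, List.toFinset_append_singleton, ← sum_neg_distrib]
  refine sum_congr rfl fun S hS => ?_
  have haS : a ∈ S := (mem_filter.mp hS).2
  simp only [subword_cons, subword_append_singleton, haS, if_true, ← h,
    patternOf_append_singleton_eq_iff, Finset.prod_update_neg_of_mem haS]
  split_ifs <;> simp

theorem pair_append_singleton {v u : List ℕ} (h : patternOf (u.rotate 1) = patternOf v) :
    pair v (x ++ [a]) (Function.update sgn a (-sgn a)) =
      pairAvoiding a v (a :: x) sgn - pairThrough a u (a :: x) sgn := by
  rw [pair_eq_pairAvoiding_add_pairThrough a, pairAvoiding_append_singleton,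
    pairThrough_append_singleton a x sgn h, sub_eq_add_neg]

end

theorem CI3_word_parts_base_point_invariant_general {α : Type*} [DecidableEq α]
    (a : α) (x : List α) (sgn : α → ℤ) :
    (pair [0,1,0,1,2,2] (a :: x) sgn - pair [1,0,1,2,2,0] (a :: x) sgn
        + pair [0,1,2,2,0,1] (a :: x) sgn - pair [1,2,2,0,1,0] (a :: x) sgn
        + pair [2,2,0,1,0,1] (a :: x) sgn - pair [2,0,1,0,1,2] (a :: x) sgn =
      pair [0,1,0,1,2,2] (x ++ [a]) (Function.update sgn a (-(sgn a)))
        - pair [1,0,1,2,2,0] (x ++ [a]) (Function.update sgn a (-(sgn a)))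
        + pair [0,1,2,2,0,1] (x ++ [a]) (Function.update sgn a (-(sgn a)))
        - pair [1,2,2,0,1,0] (x ++ [a]) (Function.update sgn a (-(sgn a)))
        + pair [2,2,0,1,0,1] (x ++ [a]) (Function.update sgn a (-(sgn a)))
        - pair [2,0,1,0,1,2] (x ++ [a]) (Function.update sgn a (-(sgn a)))) ∧
    (pair [0,0,1,1,2,2] (a :: x) sgn - pair [0,1,1,2,2,0] (a :: x) sgn =
      pair [0,0,1,1,2,2] (x ++ [a]) (Function.update sgn a (-(sgn a)))
        - pair [0,1,1,2,2,0] (x ++ [a]) (Function.update sgn a (-(sgn a)))) := by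
  rw [pair_append_singleton a x sgn (v := [0,1,0,1,2,2]) (u := [2,0,1,0,1,2]) rfl,
    pair_append_singleton a x sgn (v := [1,0,1,2,2,0]) (u := [0,1,0,1,2,2]) rfl,
    pair_append_singleton a x sgn (v := [0,1,2,2,0,1]) (u := [1,0,1,2,2,0]) rfl,
    pair_append_singleton a x sgn (v := [1,2,2,0,1,0]) (u := [0,1,2,2,0,1]) rfl,
    pair_append_singleton a x sgn (v := [2,2,0,1,0,1]) (u := [1,2,2,0,1,0]) rfl,
    pair_append_singleton a x sgn (v := [2,0,1,0,1,2]) (u := [2,2,0,1,0,1]) rfl,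
    pair_append_singleton a x sgn (v := [0,0,1,1,2,2]) (u := [0,1,1,2,2,0]) rfl,
    pair_append_singleton a x sgn (v := [0,1,1,2,2,0]) (u := [0,0,1,1,2,2]) rfl]
  simp only [pair_eq_pairAvoiding_add_pairThrough a]
  constructor <;> ring

/-- the word parts
`⟨XYXYZZ,w⟩ − ⟨YXYZZX,w⟩ + ⟨XYZZXY,w⟩ − ⟨YZZXYX,w⟩ + ⟨ZZXYXY,w⟩ − ⟨ZXYXYZ,w⟩`
and `⟨XXYYZZ,w⟩ − ⟨XYYZZX,w⟩` of the invariant `CI₃` are unchanged under the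
base point move. -/
theorem CI3_word_parts_base_point_invariant {α : Type*} [DecidableEq α]
    (a : α) (x : List α) (sgn : α → ℤ)
    (hGauss : ∀ c ∈ a :: x, (a :: x).count c = 2)
    (hsgn : ∀ c, sgn c = 1 ∨ sgn c = -1) :
    (pair [0,1,0,1,2,2] (a :: x) sgn - pair [1,0,1,2,2,0] (a :: x) sgn
        + pair [0,1,2,2,0,1] (a :: x) sgn - pair [1,2,2,0,1,0] (a :: x) sgn
        + pair [2,2,0,1,0,1] (a :: x) sgn - pair [2,0,1,0,1,2] (a :: x) sgn =
      pair [0,1,0,1,2,2] (x ++ [a]) (Function.update sgn a (-(sgn a)))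
        - pair [1,0,1,2,2,0] (x ++ [a]) (Function.update sgn a (-(sgn a)))
        + pair [0,1,2,2,0,1] (x ++ [a]) (Function.update sgn a (-(sgn a)))
        - pair [1,2,2,0,1,0] (x ++ [a]) (Function.update sgn a (-(sgn a)))
        + pair [2,2,0,1,0,1] (x ++ [a]) (Function.update sgn a (-(sgn a)))
        - pair [2,0,1,0,1,2] (x ++ [a]) (Function.update sgn a (-(sgn a)))) ∧
    (pair [0,0,1,1,2,2] (a :: x) sgn - pair [0,1,1,2,2,0] (a :: x) sgn =
      pair [0,0,1,1,2,2] (x ++ [a]) (Function.update sgn a (-(sgn a)))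
        - pair [0,1,1,2,2,0] (x ++ [a]) (Function.update sgn a (-(sgn a)))) :=
  CI3_word_parts_base_point_invariant_general a x sgn
end

section
/- Let v be a Gauss word of length 2n whose letters carry dimensions d ∈ {1, 2}, and for 0 ≤ k < 2n let rotᵏ v denote the cyclic rotation of v by k positions (dimensions rotating with the letters). Set ε₀ = 1 and ε_{k+1} = −ε_k if the occurrence v(k) rotated at step k+1 belongs to a 1-dimensional letter, ε_{k+1} = ε_k if it belongs to a 2-dimensional letter. Then for every nanoword w, the sum Σ_{k=0}^{2n−1} ε_k ⟨rotᵏ v, w⟩ is unchanged when w is replaced by its image under the base point move. (This is the invariance of pairings with marked cyclic equivalence classes, underlying the invariant GCI₃ of plane closed curves.) -/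
/-!
Write ⟨rotᵏ v, w⟩ as a sum over letter subsets S of w. If the first letter a of w is not in S,
the base point move changes neither the sub-word nor the signs involved. If a ∈ S, the sub-word
of the moved word is the one-step rotation of the old one, so S matches rotᵏ⁺¹ v after the move
exactly when it matches rotᵏ v before it, and the weights differ only by the factor (−1)^d coming
from negating sgn a, where d is the dimension of the pattern letter v(k) matched to a; this is
exactly ε_{k+1}/ε_k. Hence the contributions of S are shifted by one index in k, and the shift
closes up cyclically because a Gauss word has an even number of 1-dimensional occurrences, so
ε_{2n} = ε_0.
-/

open Finset

/-- The generalized pairing for dimensioned patterns: `v` is a list of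
(letter id, dimension) pairs, and each letter `a` of a matching subset contributes
`sgn a ^ d`, where `d` is the dimension of the pattern letter matched to `a`. -/
def gpair {α : Type*} [DecidableEq α] (v : List (ℕ × ℕ)) (w : List α) (sgn : α → ℤ) : ℤ :=
  ∑ S ∈ w.toFinset.powerset,
    if patternOf (subword w S) = patternOf (v.map Prod.fst) then
      ∏ i : Fin (subword w S).length,
        if (subword w S).idxOf ((subword w S).get i) = (i : ℕ) then
          sgn ((subword w S).get i) ^ ((v.map Prod.snd).getD (i : ℕ) 1)
        else 1
    else 0

section General

variable {α : Type*} [DecidableEq α]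

theorem map_snd_eq_map_map_fst {γ δ : Type*} {l : List (γ × δ)} {dim : γ → δ}
    (h : ∀ q ∈ l, q.2 = dim q.1) : l.map Prod.snd = (l.map Prod.fst).map dim := by
  rw [List.map_map]
  exact List.map_congr_left h

theorem exists_forall_snd_eq_of_fst_eq {γ δ : Type*} [Nonempty δ] {l : List (γ × δ)}
    (h : ∀ p ∈ l, ∀ q ∈ l, p.1 = q.1 → p.2 = q.2) : ∃ dim : γ → δ, ∀ q ∈ l, q.2 = dim q.1 := by
  classical
  refine ⟨fun c => if hc : ∃ q ∈ l, q.1 = c then hc.choose.2 else Classical.arbitrary δ,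
    fun q hq => ?_⟩
  have hc : ∃ p ∈ l, p.1 = q.1 := ⟨q, hq, rfl⟩
  dsimp only
  rw [dif_pos hc]
  exact h q hq _ hc.choose_spec.1 hc.choose_spec.2.symm

theorem even_countP_of_forall_count_eq_two {γ : Type*} [DecidableEq γ] {L : List γ}
    (hL : ∀ c ∈ L, L.count c = 2) (P : γ → Bool) : Even (L.countP P) := by
  rw [List.countP_eq_length_filter, ← List.sum_toFinset_count_eq_length]
  refine Finset.even_sum _ fun c hc => ?_
  have hc' := List.mem_toFinset.1 hc
  rw [List.count_filter (List.of_mem_filter hc'), hL c (List.mem_of_mem_filter hc')]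
  exact even_two

theorem even_countP_of_count_map_fst_eq_two {γ δ : Type*} [DecidableEq γ] {l : List (γ × δ)}
    (hl : ∀ c ∈ l.map Prod.fst, (l.map Prod.fst).count c = 2) {dim : γ → δ}
    (hdim : ∀ q ∈ l, q.2 = dim q.1) (P : γ × δ → Bool) : Even (l.countP P) := by
  have hl' : (l.map Prod.fst).map (fun c => (c, dim c)) = l := by
    rw [List.map_map]
    exact (List.map_congr_left (g := id) fun q hq =>
      show (q.1, dim q.1) = q from Prod.ext rfl (hdim q hq).symm).trans (List.map_id l)
  rw [← hl', List.countP_map]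
  exact even_countP_of_forall_count_eq_two hl _

theorem sum_range_comp_succ_of_eq {M : Type*} [AddCommMonoid M] {N : ℕ} (f : ℕ → M)
    (h : f N = f 0) : ∑ k ∈ range N, f (k + 1) = ∑ k ∈ range N, f k := by
  cases N with
  | zero => simp
  | succ m => rw [sum_range_succ, h, sum_range_succ' f]

theorem prod_fin_ite_idxOf_eq_prod_toFinset {M : Type*} [CommMonoid M] (l : List α)
    (F : α → ℕ → M) :
    (∏ i : Fin l.length, if l.idxOf (l.get i) = (i : ℕ) then F (l.get i) i else 1) =
      ∏ c ∈ l.toFinset, F c (l.idxOf c) := by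
  rw [← Finset.prod_filter]
  refine Finset.prod_bij' (fun i _ => l.get i)
    (fun c hc => ⟨l.idxOf c, List.idxOf_lt_length_iff.2 (List.mem_toFinset.1 hc)⟩)
    (fun i _ => by simp) (fun c _ => by simp) (fun i hi => ?_) (fun c _ => by simp)
    (fun i hi => ?_)
  · exact Fin.ext (Finset.mem_filter.1 hi).2
  · rw [(Finset.mem_filter.1 hi).2]

theorem prod_pow_update_neg {R : Type*} [CommRing R] {s : Finset α} {a : α} (ha : a ∈ s)
    (sgn : α → R) (g : α → ℕ) :
    ∏ c ∈ s, Function.update sgn a (-sgn a) c ^ g c = (-1) ^ g a * ∏ c ∈ s, sgn c ^ g c := by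
  rw [← Finset.mul_prod_erase s _ ha, ← Finset.mul_prod_erase s _ ha, Function.update_self,
    neg_pow, mul_assoc, Finset.prod_congr rfl fun c hc => by
      rw [Function.update_of_ne (Finset.ne_of_mem_erase hc)]]

end General

section Patterns

variable {α β : Type*} [DecidableEq α] [DecidableEq β]

theorem idxOf_map_of_injOn {l : List α} {f : α → β} (hf : Set.InjOn f {c | c ∈ l}) {c : α}
    (hc : c ∈ l) : (l.map f).idxOf (f c) = l.idxOf c := by
  induction l with
  | nil => simp at hc
  | cons b l ih =>
    by_cases hbc : b = c
    · simp [hbc]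
    · have hfbc : f b ≠ f c := fun h => hbc (hf (by simp) hc h)
      have hcl : c ∈ l := (List.mem_cons.1 hc).resolve_left (Ne.symm hbc)
      rw [List.map_cons, List.idxOf_cons_ne _ hfbc, List.idxOf_cons_ne _ hbc,
        ih (hf.mono fun y hy => List.mem_cons_of_mem b hy) hcl]

theorem patternOf_map_of_injOn {l : List α} {f : α → β} (hf : Set.InjOn f {c | c ∈ l}) :
    patternOf (l.map f) = patternOf l := by
  rw [patternOf, patternOf, List.map_map]
  exact List.map_congr_left fun c hc => idxOf_map_of_injOn hf hc

theorem exists_injOn_map_eq_of_patternOf_eq [Inhabited β] {l : List α} {m : List β}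
    (h : patternOf l = patternOf m) :
    ∃ f : α → β, Set.InjOn f {c | c ∈ l} ∧ l.map f = m := by
  have hlen : l.length = m.length := by simpa [patternOf] using congrArg List.length h
  have hidx : ∀ i (hi : i < l.length), l.idxOf l[i] = m.idxOf (m[i]'(hlen ▸ hi)) := by
    intro i hi
    simpa [patternOf] using List.getElem_of_eq h (by simpa [patternOf] using hi)
  have hfirst : ∀ c (hc : c ∈ l), l.idxOf c =
      m.idxOf (m[l.idxOf c]'(hlen ▸ List.idxOf_lt_length_iff.2 hc)) := fun c hc => by
    simpa only [List.getElem_idxOf] using hidx _ (List.idxOf_lt_length_iff.2 hc)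
  refine ⟨fun c => m.getD (l.idxOf c) default, fun c hc c' hc' hcc' => ?_, ?_⟩
  · dsimp only at hcc'
    rw [List.getD_eq_getElem _ _ (hlen ▸ List.idxOf_lt_length_iff.2 hc),
      List.getD_eq_getElem _ _ (hlen ▸ List.idxOf_lt_length_iff.2 hc')] at hcc'
    rw [← List.idxOf_inj hc, hfirst c hc, hfirst c' hc', hcc']
  · refine List.ext_getElem (by simp [hlen]) fun i h₁ h₂ => ?_
    rw [List.getElem_map, hidx i (by simpa using h₁),
      List.getD_eq_getElem _ _ (List.idxOf_lt_length_iff.2 (List.getElem_mem _)), List.getElem_idxOf]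

theorem patternOf_eq_patternOf_iff [Inhabited β] {l : List α} {m : List β} :
    patternOf l = patternOf m ↔ ∃ f : α → β, Set.InjOn f {c | c ∈ l} ∧ l.map f = m :=
  ⟨exists_injOn_map_eq_of_patternOf_eq, fun ⟨_, hf, hm⟩ => hm ▸ (patternOf_map_of_injOn hf).symm⟩

theorem patternOf_rotate_eq_patternOf_rotate_iff [Inhabited β] {l : List α} {m : List β}
    (r : ℕ) : patternOf (l.rotate r) = patternOf (m.rotate r) ↔ patternOf l = patternOf m := by
  simp only [patternOf_eq_patternOf_iff, List.map_rotate, List.rotate_eq_rotate, List.mem_rotate]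

end Patterns

section Weights

variable {α : Type*} [DecidableEq α]

def letterWeight (l : List α) (D : List ℕ) (sgn : α → ℤ) : ℤ :=
  ∏ c ∈ l.toFinset, sgn c ^ D.getD (l.idxOf c) 1

theorem letterWeight_map (l : List α) (g : α → ℕ) (sgn : α → ℤ) :
    letterWeight l (l.map g) sgn = ∏ c ∈ l.toFinset, sgn c ^ g c := by
  refine Finset.prod_congr rfl fun c hc => ?_
  have hc' := List.idxOf_lt_length_iff.2 (List.mem_toFinset.1 hc)
  rw [List.getD_eq_getElem _ _ (by simpa using hc'), List.getElem_map, List.getElem_idxOf]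

theorem letterWeight_update_of_notMem {l : List α} {a : α} (ha : a ∉ l) (D : List ℕ)
    (sgn : α → ℤ) (b : ℤ) : letterWeight l D (Function.update sgn a b) = letterWeight l D sgn :=
  Finset.prod_congr rfl fun c hc => by
    rw [Function.update_of_ne (ne_of_mem_of_not_mem (List.mem_toFinset.1 hc) ha)]

def gpairTerm (v : List (ℕ × ℕ)) (w : List α) (sgn : α → ℤ) (S : Finset α) : ℤ :=
  if patternOf (subword w S) = patternOf (v.map Prod.fst) then
    letterWeight (subword w S) (v.map Prod.snd) sgn
  else 0

theorem gpair_eq_sum_gpairTerm (v : List (ℕ × ℕ)) (w : List α) (sgn : α → ℤ) :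
    gpair v w sgn = ∑ S ∈ w.toFinset.powerset, gpairTerm v w sgn S := by
  refine Finset.sum_congr rfl fun S _ => if_congr Iff.rfl ?_ rfl
  exact prod_fin_ite_idxOf_eq_prod_toFinset _ fun c i => sgn c ^ (v.map Prod.snd).getD i 1

end Weights

section BasePoint

variable {α : Type*} [DecidableEq α] {a : α} {S : Finset α}

theorem subword_cons_of_mem (x : List α) (h : a ∈ S) : subword (a :: x) S = a :: subword x S := by
  simp [subword, h]

theorem subword_cons_of_notMem (x : List α) (h : a ∉ S) : subword (a :: x) S = subword x S := by
  simp [subword, h]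

theorem subword_append_singleton_of_mem (x : List α) (h : a ∈ S) :
    subword (x ++ [a]) S = subword x S ++ [a] := by
  simp [subword, h]

theorem subword_append_singleton_of_notMem (x : List α) (h : a ∉ S) :
    subword (x ++ [a]) S = subword x S := by
  simp [subword, h]

theorem notMem_subword (x : List α) (h : a ∉ S) : a ∉ subword x S := by
  simp [subword, h]

theorem gpairTerm_base_point_of_notMem (u : List (ℕ × ℕ)) (x : List α) (sgn : α → ℤ)
    (haS : a ∉ S) :
    gpairTerm u (x ++ [a]) (Function.update sgn a (-sgn a)) S = gpairTerm u (a :: x) sgn S := by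
  simp only [gpairTerm, subword_cons_of_notMem x haS, subword_append_singleton_of_notMem x haS,
    letterWeight_update_of_notMem (notMem_subword x haS)]

theorem gpairTerm_base_point_of_mem (p : ℕ × ℕ) (u : List (ℕ × ℕ)) {dim : ℕ → ℕ}
    (hdim : ∀ q ∈ p :: u, q.2 = dim q.1) (x : List α) (sgn : α → ℤ) (haS : a ∈ S) :
    gpairTerm (u ++ [p]) (x ++ [a]) (Function.update sgn a (-sgn a)) S =
      (-1) ^ p.2 * gpairTerm (p :: u) (a :: x) sgn S := by
  set t := subword x S
  have hv : (u ++ [p]).map Prod.fst = ((p :: u).map Prod.fst).rotate 1 := by simp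
  have hw : t ++ [a] = (a :: t).rotate 1 := by simp
  rw [gpairTerm, gpairTerm, subword_cons_of_mem x haS, subword_append_singleton_of_mem x haS, hv,
    hw]
  simp only [patternOf_rotate_eq_patternOf_rotate_iff]
  split_ifs with hmatch
  · obtain ⟨f, -, hf⟩ := patternOf_eq_patternOf_iff.1 hmatch
    have hD : (p :: u).map Prod.snd = (a :: t).map (dim ∘ f) := by
      rw [map_snd_eq_map_map_fst hdim, ← hf, List.map_map]
    have hD' : (u ++ [p]).map Prod.snd = ((a :: t).rotate 1).map (dim ∘ f) := by
      rw [List.map_rotate, ← hD]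
      simp
    have hpa : p.2 = dim (f a) := (List.cons.inj hD).1
    rw [hD, hD', letterWeight_map, letterWeight_map,
      List.toFinset_eq_of_perm _ _ (List.rotate_perm _ _), prod_pow_update_neg (by simp), hpa]
    rfl
  · simp

end BasePoint

section CyclicSign

def cyclicSign (v : List (ℕ × ℕ)) (k : ℕ) : ℤ :=
  (-1) ^ ((v.take k).countP fun p => decide (p.2 = 1))

theorem cyclicSign_zero (v : List (ℕ × ℕ)) : cyclicSign v 0 = 1 := by
  simp [cyclicSign]

theorem cyclicSign_length {v : List (ℕ × ℕ)} (h : Even (v.countP fun p => decide (p.2 = 1))) :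
    cyclicSign v v.length = 1 := by
  rw [cyclicSign, List.take_length, h.neg_one_pow]

theorem cyclicSign_succ {v : List (ℕ × ℕ)} (hv : ∀ q ∈ v, q.2 = 1 ∨ q.2 = 2) {k : ℕ}
    (hk : k < v.length) : cyclicSign v (k + 1) = (-1) ^ v[k].2 * cyclicSign v k := by
  rw [cyclicSign, cyclicSign, List.take_add_one, List.getElem?_eq_getElem hk, Option.toList_some,
    List.countP_append, pow_add, mul_comm]
  rcases hv _ (List.getElem_mem hk) with h | h <;> simp [h]

variable {α : Type*} [DecidableEq α] {v : List (ℕ × ℕ)} {dim : ℕ → ℕ}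

theorem cyclicSign_mul_gpairTerm_base_point_succ (hdim : ∀ q ∈ v, q.2 = dim q.1)
    (hv : ∀ q ∈ v, q.2 = 1 ∨ q.2 = 2) (a : α) (x : List α) (sgn : α → ℤ) {S : Finset α}
    (haS : a ∈ S) {k : ℕ} (hk : k < v.length) :
    cyclicSign v (k + 1) *
        gpairTerm (v.rotate (k + 1)) (x ++ [a]) (Function.update sgn a (-sgn a)) S =
      cyclicSign v k * gpairTerm (v.rotate k) (a :: x) sgn S := by
  obtain ⟨u, hu⟩ : ∃ u, v.rotate k = v[k] :: u := ⟨_, by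
    rw [List.rotate_eq_drop_append_take hk.le, List.drop_eq_getElem_cons hk, List.cons_append]⟩
  have hu' : v.rotate (k + 1) = u ++ [v[k]] := by
    rw [← List.rotate_rotate, hu, List.rotate_cons_succ, List.rotate_zero]
  have hdim' : ∀ q ∈ v[k] :: u, q.2 = dim q.1 := fun q hq =>
    hdim q (List.mem_rotate.1 (by rw [hu]; exact hq))
  rw [hu, hu', gpairTerm_base_point_of_mem _ _ hdim' x sgn haS, cyclicSign_succ hv hk,
    mul_mul_mul_comm, ← mul_pow, neg_one_mul, neg_neg, one_pow, one_mul]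

theorem sum_cyclicSign_mul_gpairTerm_base_point_of_mem (hdim : ∀ q ∈ v, q.2 = dim q.1)
    (hv : ∀ q ∈ v, q.2 = 1 ∨ q.2 = 2) (heven : Even (v.countP fun p => decide (p.2 = 1)))
    (a : α) (x : List α) (sgn : α → ℤ) {S : Finset α} (haS : a ∈ S) :
    ∑ k ∈ range v.length, cyclicSign v k * gpairTerm (v.rotate k) (a :: x) sgn S =
      ∑ k ∈ range v.length,
        cyclicSign v k * gpairTerm (v.rotate k) (x ++ [a]) (Function.update sgn a (-sgn a)) S := by
  rw [← sum_range_comp_succ_of_eq (fun k => cyclicSign v k *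
      gpairTerm (v.rotate k) (x ++ [a]) (Function.update sgn a (-sgn a)) S)
    (by simp only [cyclicSign_length heven, cyclicSign_zero, List.rotate_length, List.rotate_zero])]
  exact sum_congr rfl fun k hk =>
    (cyclicSign_mul_gpairTerm_base_point_succ hdim hv a x sgn haS (mem_range.1 hk)).symm

end CyclicSign

theorem marked_cyclic_sum_base_point_invariant_general {α : Type*} [DecidableEq α]
    (n : ℕ) (v : List (ℕ × ℕ)) (hvlen : v.length = 2 * n)
    (hvGauss : ∀ c ∈ v.map Prod.fst, (v.map Prod.fst).count c = 2)
    (hdim : ∀ p ∈ v, p.2 = 1 ∨ p.2 = 2)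
    (hdimconst : ∀ p ∈ v, ∀ q ∈ v, p.1 = q.1 → p.2 = q.2)
    (a : α) (x : List α) (sgn : α → ℤ) :
    ∑ k ∈ Finset.range (2 * n),
        (-1 : ℤ) ^ ((v.take k).countP (fun p => decide (p.2 = 1))) *
          gpair (v.rotate k) (a :: x) sgn =
      ∑ k ∈ Finset.range (2 * n),
        (-1 : ℤ) ^ ((v.take k).countP (fun p => decide (p.2 = 1))) *
          gpair (v.rotate k) (x ++ [a]) (Function.update sgn a (-(sgn a))) := by
  obtain ⟨dimOf, hdimOf⟩ := exists_forall_snd_eq_of_fst_eq hdimconst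
  have heven := even_countP_of_count_map_fst_eq_two hvGauss hdimOf fun p => decide (p.2 = 1)
  have hletters : (x ++ [a]).toFinset = (a :: x).toFinset := by
    ext
    simp
  rw [← hvlen]
  change ∑ k ∈ range v.length, cyclicSign v k * _ = ∑ k ∈ range v.length, cyclicSign v k * _
  simp only [gpair_eq_sum_gpairTerm, hletters, mul_sum]
  rw [sum_comm, sum_comm (s := range v.length)]
  refine sum_congr rfl fun S _ => ?_
  by_cases haS : a ∈ S
  · exact sum_cyclicSign_mul_gpairTerm_base_point_of_mem hdimOf hdim heven a x sgn haS
  · simp only [gpairTerm_base_point_of_notMem _ x sgn haS]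

/-- for a dimensioned Gauss word `v` of length `2n` (letters given
with dimensions in `{1, 2}`, both occurrences of a letter carrying the same
dimension), with signs `ε_k = (−1)^(number of 1-dimensional occurrences among the
first k positions)`, the sum `Σ_{k<2n} ε_k ⟨rotᵏ v, w⟩` is unchanged when the
nanoword `w` is replaced by its image under the base point move. -/
theorem marked_cyclic_sum_base_point_invariant {α : Type*} [DecidableEq α]
    (n : ℕ) (v : List (ℕ × ℕ)) (hvlen : v.length = 2 * n)
    (hvGauss : ∀ c ∈ v.map Prod.fst, (v.map Prod.fst).count c = 2)
    (hdim : ∀ p ∈ v, p.2 = 1 ∨ p.2 = 2)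
    (hdimconst : ∀ p ∈ v, ∀ q ∈ v, p.1 = q.1 → p.2 = q.2)
    (a : α) (x : List α) (sgn : α → ℤ)
    (hGauss : ∀ c ∈ a :: x, (a :: x).count c = 2)
    (hsgn : ∀ c, sgn c = 1 ∨ sgn c = -1) :
    ∑ k ∈ Finset.range (2 * n),
        (-1 : ℤ) ^ ((v.take k).countP (fun p => decide (p.2 = 1))) *
          gpair (v.rotate k) (a :: x) sgn =
      ∑ k ∈ Finset.range (2 * n),
        (-1 : ℤ) ^ ((v.take k).countP (fun p => decide (p.2 = 1))) *
          gpair (v.rotate k) (x ++ [a]) (Function.update sgn a (-(sgn a))) :=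
  marked_cyclic_sum_base_point_invariant_general n v hvlen hvGauss hdim hdimconst a x sgn
end
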